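/- arXiv:1910.12150 — 3 statements merged into one kernel-verified Lean document; each statement's English description precedes it below -/
import Mathlib

section
/- Let H be a real Hilbert space and let F ⊆ H be a linear subspace equipped with an inner product whose associated (prehilbertian) norm |·| makes the inclusion of F into H continuous, i.e. there is M > 0 with ‖φ‖_H ≤ M|φ| for all φ ∈ F. Let a : H × F → ℝ be bilinear such that for every fixed φ ∈ F the map u ↦ a(u,φ) is a continuous linear functional on H, and suppose a is coercive on F: there exists α > 0 with a(φ,φ) ≥ α|φ|² for all φ ∈ F. Then for every linear functional L : F → ℝ that is continuous with respect to |·| (i.e. there is K with |L(φ)| ≤ K|φ| for all φ ∈ F), there exists u ∈ H such that a(u,φ) = L(φ) for all φ ∈ F. -/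
/-!
By the Riesz theorem, `a u φ = ⟪B φ, u⟫` for a linear map `B : F → H`. Coercivity and the
continuity of `F ↪ H` give `α |φ|² ≤ ⟪B φ, φ⟫ ≤ M ‖B φ‖ |φ|`, so `|φ| ≤ (M / α) ‖B φ‖` and
`|L φ|` is bounded by a multiple of `‖B φ‖`. Hence `B φ ↦ L φ` is a well-defined bounded
functional on the range of `B`; extend it to `H` by Hahn–Banach and represent the extension
as `⟪u, ·⟫`.
-/

open InnerProductSpace

theorem le_div_of_mul_sq_le_mul {α s t : ℝ} (hα : 0 < α) (hs : 0 ≤ s) (ht : 0 ≤ t)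
    (h : α * s ^ 2 ≤ t * s) : s ≤ t / α := by
  rw [le_div_iff₀' hα]
  rcases hs.eq_or_lt with rfl | hs
  · simpa using ht
  · exact le_of_mul_le_mul_right (by nlinarith) hs

theorem LinearMap.exists_strongDual_comp_eq_of_norm_le {𝕜 E F : Type*} [RCLike 𝕜]
    [AddCommGroup E] [Module 𝕜 E] [NormedAddCommGroup F] [NormedSpace 𝕜 F]
    (T : E →ₗ[𝕜] F) (L : E →ₗ[𝕜] 𝕜) (C : ℝ) (hL : ∀ x, ‖L x‖ ≤ C * ‖T x‖) :
    ∃ g : StrongDual 𝕜 F, ∀ x, g (T x) = L x := by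
  have hker : ker T ≤ ker L := fun x hx => by
    simpa [show T x = 0 from hx] using hL x
  let ℓ : range T →ₗ[𝕜] 𝕜 := (ker T).liftQ L hker ∘ₗ T.quotKerEquivRange.symm.toLinearMap
  have hℓ : ∀ x, ℓ ⟨T x, mem_range_self T x⟩ = L x := fun x => by
    simp [ℓ, quotKerEquivRange_symm_apply_image]
  have hℓ_bound : ∀ y : range T, ‖ℓ y‖ ≤ C * ‖y‖ := by
    rintro ⟨_, x, rfl⟩
    simpa [hℓ] using hL x
  obtain ⟨g, hg, -⟩ := exists_extension_norm_eq (range T) (ℓ.mkContinuous C hℓ_bound)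
  exact ⟨g, fun x => (hg _).trans (hℓ x)⟩

theorem exists_linearMap_inner_eq {E H : Type*} [AddCommGroup E] [Module ℝ E]
    [NormedAddCommGroup H] [InnerProductSpace ℝ H] [CompleteSpace H]
    (a : H →ₗ[ℝ] E →ₗ[ℝ] ℝ) (ha : ∀ φ, Continuous fun u => a u φ) :
    ∃ B : E →ₗ[ℝ] H, ∀ φ u, inner ℝ (B φ) u = a u φ := by
  let b : E → H := fun φ => (toDual ℝ H).symm ⟨a.flip φ, ha φ⟩
  have hb : ∀ φ u, inner ℝ (b φ) u = a u φ := fun φ u => toDual_symm_apply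
  refine ⟨{ toFun := b, map_add' := ?_, map_smul' := ?_ }, hb⟩
  · exact fun φ ψ => ext_inner_right ℝ fun u => by simp [inner_add_left, hb]
  · exact fun c φ => ext_inner_right ℝ fun u => by simp [real_inner_smul_left, hb]

theorem lions_representation_general
    {H : Type*} [NormedAddCommGroup H] [InnerProductSpace ℝ H] [CompleteSpace H]
    (F : Submodule ℝ H)
    -- the inner product on `F` inducing the prehilbertian norm `φ ↦ √(p φ φ)`
    (p : F →ₗ[ℝ] F →ₗ[ℝ] ℝ)
    (hp_nonneg : ∀ φ : F, 0 ≤ p φ φ)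
    -- continuity of the inclusion `F ↪ H` with respect to the prehilbertian norm
    (M : ℝ) (hM : 0 < M)
    (hFH : ∀ φ : F, ‖(φ : H)‖ ≤ M * Real.sqrt (p φ φ))
    -- a bilinear form on `H × F`, continuous in the first variable
    (a : H →ₗ[ℝ] F →ₗ[ℝ] ℝ)
    (ha_cont : ∀ φ : F, Continuous fun u : H => a u φ)
    -- coercivity on `F`: `a (φ, φ) ≥ α |φ|²`
    (α : ℝ) (hα : 0 < α)
    (hcoer : ∀ φ : F, α * p φ φ ≤ a (φ : H) φ)
    -- a linear functional on `F`, continuous with respect to the prehilbertian norm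
    (L : F →ₗ[ℝ] ℝ) (K : ℝ)
    (hL : ∀ φ : F, |L φ| ≤ K * Real.sqrt (p φ φ)) :
    ∃ u : H, ∀ φ : F, a u φ = L φ := by
  obtain ⟨B, hB⟩ := exists_linearMap_inner_eq a ha_cont
  have hsqrt_le : ∀ φ : F, √(p φ φ) ≤ M * ‖B φ‖ / α := fun φ => by
    refine le_div_of_mul_sq_le_mul hα (Real.sqrt_nonneg _) (by positivity) ?_
    calc α * √(p φ φ) ^ 2 = α * p φ φ := by rw [Real.sq_sqrt (hp_nonneg φ)]
      _ ≤ a φ φ := hcoer φ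
      _ = inner ℝ (B φ) (φ : H) := (hB φ φ).symm
      _ ≤ ‖B φ‖ * ‖(φ : H)‖ := real_inner_le_norm _ _
      _ ≤ ‖B φ‖ * (M * √(p φ φ)) := by gcongr; exact hFH φ
      _ = M * ‖B φ‖ * √(p φ φ) := by ring
  obtain ⟨g, hg⟩ := B.exists_strongDual_comp_eq_of_norm_le L (max K 0 * (M / α)) fun φ =>
    calc ‖L φ‖ ≤ K * √(p φ φ) := hL φ
      _ ≤ max K 0 * √(p φ φ) := by gcongr; exact le_max_left K 0
      _ ≤ max K 0 * (M * ‖B φ‖ / α) := by gcongr; exact hsqrt_le φ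
      _ = max K 0 * (M / α) * ‖B φ‖ := by ring
  refine ⟨(toDual ℝ H).symm g, fun φ => ?_⟩
  rw [← hB, real_inner_comm, toDual_symm_apply, hg]

/-- **Lions' representation theorem** (Theorem 2.3): a variant of Lax–Milgram where
coercivity is only required on a subspace `F` of the Hilbert space `H`, with respect to a
(possibly different) prehilbertian norm `φ ↦ √(p φ φ)` on `F`. -/
theorem lions_representation
    {H : Type*} [NormedAddCommGroup H] [InnerProductSpace ℝ H] [CompleteSpace H]
    (F : Submodule ℝ H)
    -- the inner product on `F` inducing the prehilbertian norm `φ ↦ √(p φ φ)`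
    (p : F →ₗ[ℝ] F →ₗ[ℝ] ℝ)
    (hp_symm : ∀ φ ψ : F, p φ ψ = p ψ φ)
    (hp_nonneg : ∀ φ : F, 0 ≤ p φ φ)
    -- continuity of the inclusion `F ↪ H` with respect to the prehilbertian norm
    (M : ℝ) (hM : 0 < M)
    (hFH : ∀ φ : F, ‖(φ : H)‖ ≤ M * Real.sqrt (p φ φ))
    -- a bilinear form on `H × F`, continuous in the first variable
    (a : H →ₗ[ℝ] F →ₗ[ℝ] ℝ)
    (ha_cont : ∀ φ : F, Continuous fun u : H => a u φ)
    -- coercivity on `F`: `a (φ, φ) ≥ α |φ|²`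
    (α : ℝ) (hα : 0 < α)
    (hcoer : ∀ φ : F, α * p φ φ ≤ a (φ : H) φ)
    -- a linear functional on `F`, continuous with respect to the prehilbertian norm
    (L : F →ₗ[ℝ] ℝ) (K : ℝ)
    (hL : ∀ φ : F, |L φ| ≤ K * Real.sqrt (p φ φ)) :
    ∃ u : H, ∀ φ : F, a u φ = L φ :=
  lions_representation_general F p hp_nonneg M hM hFH a ha_cont α hα hcoer L K hL
end

section
/- The pencil beam U is a classical solution of the Fermi pencil-beam equation on the open half-space: for all X', V ∈ ℝ^{n−1} and all t > 0, ∂_t U(X',t,V) + V·∇_{X'} U(X',t,V) − σ̃(t) Δ_V U(X',t,V) + λ̃(t) U(X',t,V) = 0, where ∇_{X'} is the gradient in X' and Δ_V is the Euclidean Laplacian in V. -/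
open MeasureTheory Real
open scoped RealInnerProductSpace

/-- The Gaussian kernel `G_{a,b,c}` on `ℝ^{n-1} × ℝ^{n-1}`. -/
noncomputable def Gkernel (n : ℕ) (a b c : ℝ)
    (X V : EuclideanSpace ℝ (Fin (n - 1))) : ℝ :=
  ((4 * Real.pi * Real.sqrt (a * c - b ^ 2)) ^ (n - 1))⁻¹ *
    Real.exp (-(a * ‖X‖ ^ 2 + 2 * b * ⟪X, V⟫ + c * ‖V‖ ^ 2) /
      (4 * (a * c - b ^ 2)))

/-- The pencil beam `U(X',t,V) = e^{-Λ(t)} G_{a(t),b(t),c(t)}(X' - tV, V - Θ)` with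
`a(t) = ∫₀ᵗ σ̃`, `b(t) = ∫₀ᵗ s σ̃(s) ds`, `c(t) = ∫₀ᵗ s² σ̃(s) ds`, `Λ(t) = ∫₀ᵗ λ̃`. -/
noncomputable def pencilBeam (n : ℕ) (sig lam : ℝ → ℝ)
    (Θ : EuclideanSpace ℝ (Fin (n - 1)))
    (X' : EuclideanSpace ℝ (Fin (n - 1))) (t : ℝ)
    (V : EuclideanSpace ℝ (Fin (n - 1))) : ℝ :=
  Real.exp (-(∫ s in (0:ℝ)..t, lam s)) *
    Gkernel n (∫ s in (0:ℝ)..t, sig s) (∫ s in (0:ℝ)..t, s * sig s)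
      (∫ s in (0:ℝ)..t, s ^ 2 * sig s) (X' - t • V) (V - Θ)

/-!
With `Y = X' - tV` and `W = V - Θ`, the exponent of `G_{a,b,c}(Y, W)` is `-Q(Y, W) / (4Δ)` for the
quadratic form `Q(Y, W) = a‖Y‖² + 2b⟪Y, W⟫ + c‖W‖²`. Along any line `s ↦ (Y + s y, W + s w)` the
kernel is therefore itself times the exponential of a quadratic polynomial in `s`, which gives the
transport term and the Laplacian in `V` in closed form. In `t` the coefficients are moments of `σ̃`,
so `a' = σ̃`, `b' = tσ̃`, `c' = t²σ̃` and `Δ' = σ̃ (at² - 2bt + c)`.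

After division by `U` the equation is an identity in `‖Y‖², ⟪Y, W⟫, ‖W‖²` with coefficients
rational in `a, b, c`: the part of `∂_t Q` due to `∂_t Y = -V` cancels the transport term, the
term `-(n-1)Δ'/(2Δ)` from the normalising factor cancels the trace part of `σ̃ Δ_V`, and the rest
vanishes because `Δ = ac - b²`. Positivity of `Δ` comes from `Δ = a ∫₀ᵗ σ̃(s) (s - b/a)² ds`.
-/

noncomputable def moment (f : ℝ → ℝ) (k : ℕ) (t : ℝ) : ℝ :=
  ∫ s in (0:ℝ)..t, s ^ k * f s

section Moment

variable {f : ℝ → ℝ} {t : ℝ}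

lemma ContinuousOn.intervalIntegrable_of_Ici (hf : ContinuousOn f (Set.Ici 0)) (ht : 0 ≤ t) :
    IntervalIntegrable f volume 0 t :=
  (hf.mono (by rw [Set.uIcc_of_le ht]; exact Set.Icc_subset_Ici_self)).intervalIntegrable

lemma ContinuousOn.hasDerivAt_integral_of_Ici (hf : ContinuousOn f (Set.Ici 0)) (ht : 0 < t) :
    HasDerivAt (fun u => ∫ s in (0:ℝ)..u, f s) (f t) t :=
  intervalIntegral.integral_hasDerivAt_right (hf.intervalIntegrable_of_Ici ht.le)
    ((hf.mono (Set.Ioi_subset_Ici le_rfl)).stronglyMeasurableAtFilter isOpen_Ioi t ht)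
    (hf.continuousAt (Ici_mem_nhds ht))

lemma hasDerivAt_moment (hf : ContinuousOn f (Set.Ici 0)) (k : ℕ) (ht : 0 < t) :
    HasDerivAt (moment f k) (t ^ k * f t) t :=
  ((continuousOn_pow k).mul hf).hasDerivAt_integral_of_Ici ht

lemma integral_sub_sq_mul_eq_moment (hf : ContinuousOn f (Set.Ici 0)) (ht : 0 ≤ t) (r : ℝ) :
    ∫ s in (0:ℝ)..t, (s - r) ^ 2 * f s
      = moment f 2 t - 2 * r * moment f 1 t + r ^ 2 * moment f 0 t := by
  have hint (k : ℕ) : IntervalIntegrable (fun s => s ^ k * f s) volume 0 t :=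
    ((continuousOn_pow k).mul hf).intervalIntegrable_of_Ici ht
  simp only [moment]
  rw [← intervalIntegral.integral_const_mul, ← intervalIntegral.integral_const_mul,
    ← intervalIntegral.integral_sub (hint 2) ((hint 1).const_mul _),
    ← intervalIntegral.integral_add ((hint 2).sub ((hint 1).const_mul _))
      ((hint 0).const_mul _)]
  congr 1
  ext s
  ring

variable {σ₀ : ℝ}

lemma moment_zero_pos (hσ₀ : 0 < σ₀) (hf : ContinuousOn f (Set.Ici 0))
    (hf_lb : ∀ s, 0 ≤ s → σ₀ ≤ f s) (ht : 0 < t) : 0 < moment f 0 t := by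
  have hlower : ∫ _ in (0:ℝ)..t, σ₀ ≤ moment f 0 t :=
    intervalIntegral.integral_mono_on ht.le intervalIntegrable_const
      (((continuousOn_pow 0).mul hf).intervalIntegrable_of_Ici ht.le)
      fun s hs => by simpa using hf_lb s hs.1
  rw [intervalIntegral.integral_const, smul_eq_mul, sub_zero] at hlower
  exact (mul_pos ht hσ₀).trans_le hlower

lemma integral_sub_sq_mul_pos (hσ₀ : 0 < σ₀) (hf : ContinuousOn f (Set.Ici 0))
    (hf_lb : ∀ s, 0 ≤ s → σ₀ ≤ f s) (ht : 0 < t) (r : ℝ) :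
    0 < ∫ s in (0:ℝ)..t, (s - r) ^ 2 * f s := by
  have hσ₀_integral :
      ∫ s in (0:ℝ)..t, σ₀ * (s - r) ^ 2 = σ₀ * (((t - r) ^ 3 + r ^ 3) / 3) := by
    rw [intervalIntegral.integral_const_mul, intervalIntegral.integral_comp_sub_right (· ^ 2),
      integral_pow]
    push_cast
    ring
  have hcube : 0 < (t - r) ^ 3 + r ^ 3 := by
    nlinarith [mul_pos ht (add_pos_of_pos_of_nonneg (mul_pos ht ht) (sq_nonneg (t - 2 * r))),
      sq_nonneg r]
  have hlower : ∫ s in (0:ℝ)..t, σ₀ * (s - r) ^ 2 ≤ ∫ s in (0:ℝ)..t, (s - r) ^ 2 * f s :=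
    intervalIntegral.integral_mono_on ht.le (Continuous.intervalIntegrable (by fun_prop) _ _)
      ((((continuousOn_id.sub continuousOn_const).pow 2).mul hf).intervalIntegrable_of_Ici ht.le)
      fun s hs => by nlinarith [hf_lb s hs.1, sq_nonneg (s - r)]
  rw [hσ₀_integral] at hlower
  exact lt_of_lt_of_le (by positivity) hlower

lemma moment_det_pos (hσ₀ : 0 < σ₀) (hf : ContinuousOn f (Set.Ici 0))
    (hf_lb : ∀ s, 0 ≤ s → σ₀ ≤ f s) (ht : 0 < t) :
    0 < moment f 0 t * moment f 2 t - moment f 1 t ^ 2 := by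
  have hA := moment_zero_pos hσ₀ hf hf_lb ht
  have hvariance := integral_sub_sq_mul_eq_moment hf ht.le (moment f 1 t / moment f 0 t)
  have : moment f 0 t * moment f 2 t - moment f 1 t ^ 2
      = moment f 0 t * ∫ s in (0:ℝ)..t, (s - moment f 1 t / moment f 0 t) ^ 2 * f s := by
    rw [hvariance]
    field_simp
    ring
  rw [this]
  exact mul_pos hA (integral_sub_sq_mul_pos hσ₀ hf hf_lb ht _)

end Moment

section GaussianForm

variable {E : Type*} [NormedAddCommGroup E] [InnerProductSpace ℝ E]

noncomputable def gaussQuad (a b c : ℝ) (Y W : E) : ℝ :=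
  a * ‖Y‖ ^ 2 + 2 * b * ⟪Y, W⟫ + c * ‖W‖ ^ 2

lemma gaussQuad_add_smul (a b c s : ℝ) (Y W y w : E) :
    gaussQuad a b c (Y + s • y) (W + s • w) = gaussQuad a b c Y W
      + 2 * s * (⟪a • Y + b • W, y⟫ + ⟪b • Y + c • W, w⟫) + s ^ 2 * gaussQuad a b c y w := by
  simp only [gaussQuad, ← real_inner_self_eq_norm_sq, inner_add_left, inner_add_right,
    inner_smul_left, inner_smul_right, RCLike.conj_to_real, real_inner_comm y W,
    real_inner_comm w Y, real_inner_comm y Y, real_inner_comm w W]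
  ring

lemma HasDerivAt.gaussQuad {a b c : ℝ → ℝ} {Y W : ℝ → E} {a' b' c' t : ℝ} {Y' W' : E}
    (ha : HasDerivAt a a' t) (hb : HasDerivAt b b' t) (hc : HasDerivAt c c' t)
    (hY : HasDerivAt Y Y' t) (hW : HasDerivAt W W' t) :
    HasDerivAt (fun u => gaussQuad (a u) (b u) (c u) (Y u) (W u))
      (gaussQuad a' b' c' (Y t) (W t)
        + 2 * (⟪a t • Y t + b t • W t, Y'⟫ + ⟪b t • Y t + c t • W t, W'⟫)) t := by
  refine (((ha.mul hY.norm_sq).add ((hb.const_mul 2).mul (hY.inner ℝ hW))).add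
    (hc.mul hW.norm_sq)).congr_deriv ?_
  simp only [_root_.gaussQuad, inner_add_left, inner_smul_left, RCLike.conj_to_real,
    real_inner_comm Y' (W t), real_inner_comm W' (Y t)]
  ring

lemma gaussQuad_neg_smul_self (a b c t : ℝ) (e : E) :
    gaussQuad a b c (-t • e) e = (a * t ^ 2 - 2 * b * t + c) * ‖e‖ ^ 2 := by
  simp only [gaussQuad, norm_smul, inner_smul_left, real_inner_self_eq_norm_sq, norm_neg,
    Real.norm_eq_abs, mul_pow, sq_abs, RCLike.conj_to_real]
  ring

lemma gaussQuad_pow_mul (σ t : ℝ) (Y W : E) :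
    gaussQuad (t ^ 0 * σ) (t ^ 1 * σ) (t ^ 2 * σ) Y W = σ * ‖Y + t • W‖ ^ 2 := by
  simp only [gaussQuad, norm_add_sq_real, norm_smul, inner_smul_right, Real.norm_eq_abs, mul_pow,
    sq_abs]
  ring

end GaussianForm

lemma EuclideanSpace.sum_mul_inner_single {ι : Type*} [Fintype ι] [DecidableEq ι]
    (Z V : EuclideanSpace ℝ ι) :
    ∑ i, V i * ⟪Z, EuclideanSpace.single i 1⟫ = ⟪Z, V⟫ := by
  simp [PiLp.inner_apply, mul_comm]

lemma EuclideanSpace.sum_inner_single_sq {ι : Type*} [Fintype ι] [DecidableEq ι]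
    (Z : EuclideanSpace ℝ ι) :
    ∑ i, ⟪Z, EuclideanSpace.single i 1⟫ ^ 2 = ‖Z‖ ^ 2 := by
  simp [EuclideanSpace.inner_single_right, EuclideanSpace.norm_sq_eq]

lemma hasDerivAt_exp_quadratic (α β s : ℝ) :
    HasDerivAt (fun s => exp (α * s ^ 2 + β * s))
      (exp (α * s ^ 2 + β * s) * (2 * α * s + β)) s := by
  have hpoly : HasDerivAt (fun s => α * s ^ 2 + β * s) (2 * α * s + β) s := by
    refine (((hasDerivAt_pow 2 s).const_mul α).add
      ((hasDerivAt_id s).const_mul β)).congr_deriv ?_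
    simp only [Nat.cast_ofNat, Nat.add_one_sub_one, pow_one, mul_one]
    ring
  exact hpoly.exp

lemma deriv_const_mul_exp_quadratic_zero (C α β : ℝ) :
    deriv (fun s => C * exp (α * s ^ 2 + β * s)) 0 = C * β := by
  rw [((hasDerivAt_exp_quadratic α β 0).const_mul C).deriv]
  simp

lemma iteratedDeriv_two_const_mul_exp_quadratic_zero (C α β : ℝ) :
    iteratedDeriv 2 (fun s => C * exp (α * s ^ 2 + β * s)) 0 = C * (β ^ 2 + 2 * α) := by
  have hderiv : deriv (fun s => C * exp (α * s ^ 2 + β * s))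
      = fun s => C * (exp (α * s ^ 2 + β * s) * (2 * α * s + β)) :=
    funext fun s => ((hasDerivAt_exp_quadratic α β s).const_mul C).deriv
  have hslope : HasDerivAt (fun s : ℝ => 2 * α * s + β) (2 * α) 0 := by
    simpa using ((hasDerivAt_id (0:ℝ)).const_mul (2 * α)).add_const β
  have hsecond : HasDerivAt (fun s => C * (exp (α * s ^ 2 + β * s) * (2 * α * s + β)))
      (C * (exp (α * 0 ^ 2 + β * 0) * (2 * α * 0 + β) * (2 * α * 0 + β)
        + exp (α * 0 ^ 2 + β * 0) * (2 * α))) 0 :=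
    ((hasDerivAt_exp_quadratic α β 0).mul hslope).const_mul C
  rw [iteratedDeriv_succ, iteratedDeriv_one, hderiv, hsecond.deriv]
  simp only [zero_pow two_ne_zero, mul_zero, add_zero, exp_zero, one_mul]
  ring

lemma hasDerivAt_gaussianProfile (m : ℕ) {D q : ℝ → ℝ} {D' q' t : ℝ}
    (hD : HasDerivAt D D' t) (hq : HasDerivAt q q' t) (hpos : 0 < D t) :
    HasDerivAt (fun u => ((4 * π * √(D u)) ^ m)⁻¹ * exp (-q u / (4 * D u)))
      (((4 * π * √(D t)) ^ m)⁻¹ * exp (-q t / (4 * D t))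
        * (-(m * D' / (2 * D t)) - (q' * D t - q t * D') / (4 * D t ^ 2))) t := by
  have hsqrt : 0 < √(D t) := sqrt_pos.mpr hpos
  have hprefactor := (((hD.sqrt hpos.ne').const_mul (4 * π)).pow m).inv
    (pow_ne_zero m (by positivity))
  have hexponent := hq.neg.div (hD.const_mul 4) (by positivity)
  refine (hprefactor.mul hexponent.exp).congr_deriv ?_
  simp only [Pi.pow_apply, Pi.inv_apply, Pi.div_apply, Pi.neg_apply]
  have hsq : √(D t) ^ 2 = D t := sq_sqrt hpos.le
  generalize √(D t) = S at hsqrt hsq ⊢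
  rw [← hsq]
  rcases m with _ | m
  · simp only [pow_zero, inv_one, one_mul, CharP.cast_eq_zero, zero_mul, zero_div, neg_zero]
    ring
  · simp only [add_tsub_cancel_right]
    field_simp
    ring

section Kernel

variable {n : ℕ} {a b c : ℝ}

lemma Gkernel_eq_gaussQuad (Y W : EuclideanSpace ℝ (Fin (n - 1))) :
    Gkernel n a b c Y W = ((4 * π * √(a * c - b ^ 2)) ^ (n - 1))⁻¹
      * exp (-gaussQuad a b c Y W / (4 * (a * c - b ^ 2))) :=
  rfl

lemma Gkernel_add_smul (s : ℝ) (Y W y w : EuclideanSpace ℝ (Fin (n - 1))) :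
    Gkernel n a b c (Y + s • y) (W + s • w) = Gkernel n a b c Y W
      * exp (-(gaussQuad a b c y w / (4 * (a * c - b ^ 2))) * s ^ 2
        + -((⟪a • Y + b • W, y⟫ + ⟪b • Y + c • W, w⟫) / (2 * (a * c - b ^ 2))) * s) := by
  rw [Gkernel_eq_gaussQuad, Gkernel_eq_gaussQuad, gaussQuad_add_smul, mul_assoc _ (exp _),
    ← exp_add]
  congr 2
  generalize a * c - b ^ 2 = Δ
  ring

end Kernel

section PencilBeam

variable {n : ℕ} {sig lam : ℝ → ℝ} {Θ X' V : EuclideanSpace ℝ (Fin (n - 1))} {t : ℝ}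

local notation "𝐚" => moment sig 0 t
local notation "𝐛" => moment sig 1 t
local notation "𝐜" => moment sig 2 t
local notation "𝚫" => 𝐚 * 𝐜 - 𝐛 ^ 2
local notation "𝐘" => X' - t • V
local notation "𝐖" => V - Θ

lemma pencilBeam_eq_moment :
    pencilBeam n sig lam Θ X' t V = exp (-moment lam 0 t) * Gkernel n 𝐚 𝐛 𝐜 𝐘 𝐖 := by
  simp [pencilBeam, moment]

lemma deriv_pencilBeam_position (e : EuclideanSpace ℝ (Fin (n - 1))) :
    deriv (fun s : ℝ => pencilBeam n sig lam Θ (X' + s • e) t V) 0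
      = pencilBeam n sig lam Θ X' t V * -(⟪𝐚 • 𝐘 + 𝐛 • 𝐖, e⟫ / (2 * 𝚫)) := by
  have hline (s : ℝ) : pencilBeam n sig lam Θ (X' + s • e) t V
      = pencilBeam n sig lam Θ X' t V
        * exp (-(gaussQuad 𝐚 𝐛 𝐜 e 0 / (4 * 𝚫)) * s ^ 2
          + -(⟪𝐚 • 𝐘 + 𝐛 • 𝐖, e⟫ / (2 * 𝚫)) * s) := by
    have := Gkernel_add_smul (a := 𝐚) (b := 𝐛) (c := 𝐜) s 𝐘 𝐖 e 0
    rw [smul_zero, add_zero, inner_zero_right, add_zero] at this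
    rw [pencilBeam_eq_moment, pencilBeam_eq_moment, mul_assoc, ← this, add_sub_right_comm]
  simp only [hline]
  exact deriv_const_mul_exp_quadratic_zero _ _ _

lemma iteratedDeriv_two_pencilBeam_velocity (e : EuclideanSpace ℝ (Fin (n - 1))) :
    iteratedDeriv 2 (fun s : ℝ => pencilBeam n sig lam Θ X' t (V + s • e)) 0
      = pencilBeam n sig lam Θ X' t V
        * ((⟪𝐛 • 𝐘 + 𝐜 • 𝐖 - t • (𝐚 • 𝐘 + 𝐛 • 𝐖), e⟫ / (2 * 𝚫)) ^ 2
          - gaussQuad 𝐚 𝐛 𝐜 (-t • e) e / (2 * 𝚫)) := by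
  have hline (s : ℝ) : pencilBeam n sig lam Θ X' t (V + s • e)
      = pencilBeam n sig lam Θ X' t V
        * exp (-(gaussQuad 𝐚 𝐛 𝐜 (-t • e) e / (4 * 𝚫)) * s ^ 2
          + -(⟪𝐛 • 𝐘 + 𝐜 • 𝐖 - t • (𝐚 • 𝐘 + 𝐛 • 𝐖), e⟫ / (2 * 𝚫)) * s) := by
    have hshift : X' - t • (V + s • e) = 𝐘 + s • (-t • e) ∧ V + s • e - Θ = 𝐖 + s • e :=
      ⟨by module, by abel⟩
    rw [pencilBeam_eq_moment, pencilBeam_eq_moment, mul_assoc, hshift.1, hshift.2,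
      Gkernel_add_smul, inner_sub_left, inner_smul_left, inner_smul_right, RCLike.conj_to_real]
    congr 4
    ring
  simp only [hline]
  rw [iteratedDeriv_two_const_mul_exp_quadratic_zero]
  congr 1
  generalize 𝚫 = Δ
  ring

lemma sum_mul_deriv_pencilBeam_position :
    ∑ i, V i * deriv (fun s : ℝ =>
        pencilBeam n sig lam Θ (X' + s • EuclideanSpace.single i 1) t V) 0
      = pencilBeam n sig lam Θ X' t V * -(⟪𝐚 • 𝐘 + 𝐛 • 𝐖, V⟫ / (2 * 𝚫)) := by
  simp only [deriv_pencilBeam_position]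
  rw [← EuclideanSpace.sum_mul_inner_single, Finset.sum_div, ← Finset.sum_neg_distrib,
    Finset.mul_sum]
  exact Finset.sum_congr rfl fun i _ => by ring

lemma sum_iteratedDeriv_two_pencilBeam_velocity :
    ∑ i, iteratedDeriv 2 (fun s : ℝ =>
        pencilBeam n sig lam Θ X' t (V + s • EuclideanSpace.single i 1)) 0
      = pencilBeam n sig lam Θ X' t V
        * (‖𝐛 • 𝐘 + 𝐜 • 𝐖 - t • (𝐚 • 𝐘 + 𝐛 • 𝐖)‖ ^ 2 / (2 * 𝚫) ^ 2
          - (n - 1 : ℕ) * (𝐚 * t ^ 2 - 2 * 𝐛 * t + 𝐜) / (2 * 𝚫)) := by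
  simp only [iteratedDeriv_two_pencilBeam_velocity, gaussQuad_neg_smul_self,
    PiLp.norm_single, norm_one, one_pow, mul_one, div_pow]
  rw [← Finset.mul_sum, Finset.sum_sub_distrib, ← Finset.sum_div,
    EuclideanSpace.sum_inner_single_sq, Finset.sum_const, Finset.card_univ, Fintype.card_fin,
    nsmul_eq_mul, mul_div_assoc]

lemma hasDerivAt_pencilBeam_time (hsig : ContinuousOn sig (Set.Ici 0))
    (hlam : ContinuousOn lam (Set.Ici 0)) (hΔ : 0 < 𝚫) (ht : 0 < t) :
    HasDerivAt (fun s => pencilBeam n sig lam Θ X' s V)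
      (pencilBeam n sig lam Θ X' t V
        * (-lam t - (n - 1 : ℕ) * (sig t * (𝐚 * t ^ 2 - 2 * 𝐛 * t + 𝐜)) / (2 * 𝚫)
          - ((sig t * ‖𝐘 + t • 𝐖‖ ^ 2 - 2 * ⟪𝐚 • 𝐘 + 𝐛 • 𝐖, V⟫) * 𝚫
            - gaussQuad 𝐚 𝐛 𝐜 𝐘 𝐖 * (sig t * (𝐚 * t ^ 2 - 2 * 𝐛 * t + 𝐜)))
            / (4 * 𝚫 ^ 2))) t := by
  have ha := hasDerivAt_moment hsig 0 ht
  have hb := hasDerivAt_moment hsig 1 ht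
  have hc := hasDerivAt_moment hsig 2 ht
  have hdet : HasDerivAt (fun s => moment sig 0 s * moment sig 2 s - moment sig 1 s ^ 2)
      (sig t * (𝐚 * t ^ 2 - 2 * 𝐛 * t + 𝐜)) t :=
    ((ha.mul hc).sub (hb.pow 2)).congr_deriv (by push_cast; ring)
  have hY : HasDerivAt (fun s => X' - s • V) (-V) t := by
    simpa using ((hasDerivAt_id t).smul_const V).const_sub X'
  have hquad := ha.gaussQuad hb hc hY (hasDerivAt_const t (V - Θ))
  rw [gaussQuad_pow_mul, inner_neg_right, inner_zero_right, add_zero] at hquad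
  have hG := hasDerivAt_gaussianProfile (n - 1) hdet hquad hΔ
  simp only [← Gkernel_eq_gaussQuad] at hG
  rw [show (fun s => pencilBeam n sig lam Θ X' s V) = fun s => exp (-moment lam 0 s)
      * Gkernel n (moment sig 0 s) (moment sig 1 s) (moment sig 2 s) (X' - s • V) (V - Θ)
      from funext fun s => pencilBeam_eq_moment]
  refine ((hasDerivAt_moment hlam 0 ht).neg.exp.mul hG).congr_deriv ?_
  rw [pencilBeam_eq_moment, Pi.neg_apply]
  ring

end PencilBeam

theorem pencilBeam_solves_fermi_equation_general
    (n : ℕ)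
    (sig lam : ℝ → ℝ) (σ₀ : ℝ) (hσ₀ : 0 < σ₀)
    (hsig_cont : ContinuousOn sig (Set.Ici 0))
    (hsig_lb : ∀ s, 0 ≤ s → σ₀ ≤ sig s)
    (hlam_cont : ContinuousOn lam (Set.Ici 0))
    (Θ X' V : EuclideanSpace ℝ (Fin (n - 1))) (t : ℝ) (ht : 0 < t) :
    deriv (fun s => pencilBeam n sig lam Θ X' s V) t
      + ∑ i : Fin (n - 1), V i *
          deriv (fun s : ℝ =>
            pencilBeam n sig lam Θ (X' + s • EuclideanSpace.single i 1) t V) 0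
      - sig t * ∑ i : Fin (n - 1),
          iteratedDeriv 2 (fun s : ℝ =>
            pencilBeam n sig lam Θ X' t (V + s • EuclideanSpace.single i 1)) 0
      + lam t * pencilBeam n sig lam Θ X' t V = 0 := by
  have hΔ := moment_det_pos hσ₀ hsig_cont hsig_lb ht
  rw [(hasDerivAt_pencilBeam_time hsig_cont hlam_cont hΔ ht).deriv,
    sum_mul_deriv_pencilBeam_position, sum_iteratedDeriv_two_pencilBeam_velocity]
  generalize moment sig 0 t = a, moment sig 1 t = b, moment sig 2 t = c at hΔ ⊢
  generalize X' - t • V = Y, V - Θ = W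
  simp only [gaussQuad, norm_add_sq_real, norm_sub_sq_real, norm_smul, inner_add_left,
    inner_add_right, inner_smul_left, inner_smul_right, real_inner_self_eq_norm_sq,
    real_inner_comm Y W, RCLike.conj_to_real, Real.norm_eq_abs, mul_pow, sq_abs]
  field_simp
  ring

/-- The pencil beam is a classical solution of the Fermi pencil-beam equation on the open
half-space: `∂_t U + V·∇_{X'} U − σ̃(t) Δ_V U + λ̃(t) U = 0` for `t > 0`. -/
theorem pencilBeam_solves_fermi_equation
    (n : ℕ) (hn : 2 ≤ n)
    (sig lam : ℝ → ℝ) (σ₀ : ℝ) (hσ₀ : 0 < σ₀)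
    (hsig_cont : ContinuousOn sig (Set.Ici 0))
    (hsig_lb : ∀ s, 0 ≤ s → σ₀ ≤ sig s)
    (hlam_cont : ContinuousOn lam (Set.Ici 0))
    (Θ X' V : EuclideanSpace ℝ (Fin (n - 1))) (t : ℝ) (ht : 0 < t) :
    deriv (fun s => pencilBeam n sig lam Θ X' s V) t
      + ∑ i : Fin (n - 1), V i *
          deriv (fun s : ℝ =>
            pencilBeam n sig lam Θ (X' + s • EuclideanSpace.single i 1) t V) 0
      - sig t * ∑ i : Fin (n - 1),
          iteratedDeriv 2 (fun s : ℝ =>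
            pencilBeam n sig lam Θ X' t (V + s • EuclideanSpace.single i 1)) 0
      + lam t * pencilBeam n sig lam Θ X' t V = 0 :=
  pencilBeam_solves_fermi_equation_general n sig lam σ₀ hσ₀ hsig_cont hsig_lb hlam_cont Θ X' V t ht
end

section
/- Let n ≥ 2, let σ̃ : [0,∞) → ℝ be continuous with σ̃(s) ≥ σ₀ > 0, and let λ̃ : [0,∞) → ℝ be continuous with λ̃(s) ≥ λ₀ > 0. For 0 ≤ r < t set a_{r,t} = ∫_r^t σ̃(s) ds, b_{r,t} = ∫_r^t s σ̃(s) ds, c_{r,t} = ∫_r^t s² σ̃(s) ds, and let H₃(·,·; r,t) = G_{a_{r,t}, b_{r,t}, c_{r,t}}. Let Ψ : ℝ^{n−1} × [0,∞) × ℝ^{n−1} → ℝ be continuous with compact support and Lipschitz in Z = (X',V) uniformly in t: |Ψ(X'₁,t,V₁) − Ψ(X'₂,t,V₂)| ≤ L·|(X'₁,V₁) − (X'₂,V₂)| for all t ≥ 0. Define W(X', r, V) = ∫_r^∞ exp(−∫_r^t λ̃(s) ds) · ( ∫_{ℝ^{n−1}}∫_{ℝ^{n−1}} H₃(X̃, Ṽ;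 r, t) · Ψ(X' − X̃ + (r−t)V + tṼ, t, V − Ṽ) dX̃ dṼ ) dt. Then the integrals defining W converge absolutely, and there exists a constant C > 0, depending only on n and λ₀, such that for all Z₁ = (X'₁,V₁), Z₂ = (X'₂,V₂) ∈ ℝ^{2(n−1)} and all r ≥ 0, |W(X'₁, r, V₁) − W(X'₂, r, V₂)| ≤ C·L·|Z₁ − Z₂|. -/
/-
For `r < t` the moments `a, b, c` of `σ̃` on `[r, t]` satisfy `a > 0` and `ac - b² > 0`
(strict Cauchy–Schwarz), and completing the square shows that `H₃(·, ·; r, t)` is a probability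
density on `ℝ^{n-1} × ℝ^{n-1}`. So the inner integral of `W` is an average of `Ψ(·, t, ·)`: it is
bounded by `sup |Ψ|`, and since changing `Z` shifts the argument of `Ψ` by
`(ΔX' + (r - t) ΔV, ΔV)`, it is `(1 + (t - r)) L`-Lipschitz in `Z`. Against the weight
`exp (-∫_r^t λ̃) ≤ exp (-λ₀ (t - r))` this is integrable in `t`, and
`(1 + u) e^{-λ₀ u} ≤ (1 + 2/λ₀) e^{-λ₀ u / 2}` gives `C = (2/λ₀)(1 + 2/λ₀)`.
-/

open MeasureTheory Real
open scoped RealInnerProductSpace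

/-- The kernel `H₃(·,·; r,t) = G_{a_{r,t},b_{r,t},c_{r,t}}` with
`a_{r,t} = ∫_r^t σ̃`, `b_{r,t} = ∫_r^t s σ̃(s) ds`, `c_{r,t} = ∫_r^t s² σ̃(s) ds`. -/
noncomputable def H3kernel (n : ℕ) (sig : ℝ → ℝ) (r t : ℝ)
    (X V : EuclideanSpace ℝ (Fin (n - 1))) : ℝ :=
  Gkernel n (∫ s in r..t, sig s) (∫ s in r..t, s * sig s) (∫ s in r..t, s ^ 2 * sig s) X V

/-- The explicit solution `W` of the backward Fermi pencil-beam equation with source `Ψ`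
and vanishing condition at infinity. -/
noncomputable def Wsol (n : ℕ) (sig lam : ℝ → ℝ)
    (Ψ : EuclideanSpace ℝ (Fin (n - 1)) → ℝ → EuclideanSpace ℝ (Fin (n - 1)) → ℝ)
    (X' : EuclideanSpace ℝ (Fin (n - 1))) (r : ℝ)
    (V : EuclideanSpace ℝ (Fin (n - 1))) : ℝ :=
  ∫ t in Set.Ioi r, Real.exp (-(∫ s in r..t, lam s)) *
    ∫ p : EuclideanSpace ℝ (Fin (n - 1)) × EuclideanSpace ℝ (Fin (n - 1)),
      H3kernel n sig r t p.1 p.2 *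
        Ψ (X' - p.1 + (r - t) • V + t • p.2) t (V - p.2)

local notation "𝕍" n:max => EuclideanSpace ℝ (Fin (n - 1))

section TranslatedProduct

variable {G β : Type*} [AddGroup G] [MeasurableSpace G] [MeasurableAdd₂ G] [MeasurableSpace β]
  {μ : Measure G} [SFinite μ] [μ.IsAddRightInvariant] {ν : Measure β} [SFinite ν]
  {g : G → ℝ} {h : β → ℝ} {φ : β → G}

theorem integrable_prod_comp_add_mul (hg : Integrable g μ) (hgm : StronglyMeasurable g)
    (hφ : Measurable φ) (hh : Integrable h ν) :
    Integrable (fun p : G × β => g (p.1 + φ p.2) * h p.2) (μ.prod ν) := by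
  have hm : AEStronglyMeasurable (fun p : G × β => g (p.1 + φ p.2) * h p.2) (μ.prod ν) :=
    (hgm.comp_measurable (measurable_fst.add (hφ.comp measurable_snd))).aestronglyMeasurable.mul
      hh.1.comp_snd
  refine (integrable_prod_iff' hm).2 ⟨ae_of_all _ fun y => ?_, ?_⟩
  · exact (hg.comp_add_right (φ y)).mul_const (h y)
  · simp_rw [norm_mul, integral_mul_const, integral_add_right_eq_self (fun x => ‖g x‖)]
    exact hh.norm.const_mul _

theorem integral_prod_comp_add_mul (hg : Integrable g μ) (hgm : StronglyMeasurable g)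
    (hφ : Measurable φ) (hh : Integrable h ν) :
    ∫ p, g (p.1 + φ p.2) * h p.2 ∂(μ.prod ν) = (∫ x, g x ∂μ) * ∫ y, h y ∂ν := by
  rw [integral_prod_symm _ (integrable_prod_comp_add_mul hg hgm hφ hh)]
  simp_rw [integral_mul_const, integral_add_right_eq_self g, integral_const_mul]

end TranslatedProduct

theorem integrable_exp_neg_mul_sq_norm {V : Type*} [NormedAddCommGroup V]
    [InnerProductSpace ℝ V] [FiniteDimensional ℝ V] [MeasurableSpace V] [BorelSpace V]
    {b : ℝ} (hb : 0 < b) :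
    Integrable (fun v : V => rexp (-b * ‖v‖ ^ 2)) :=
  Integrable.of_integral_ne_zero <| by
    rw [GaussianFourier.integral_rexp_neg_mul_sq_norm hb]; positivity

section Gkernel

variable {n : ℕ} {a b c : ℝ}

theorem Gkernel_nonneg (X V : 𝕍 n) : 0 ≤ Gkernel n a b c X V := by
  unfold Gkernel; positivity

theorem measurable_Gkernel :
    Measurable fun q : ℝ × ℝ × ℝ × 𝕍 n × 𝕍 n =>
      Gkernel n q.1 q.2.1 q.2.2.1 q.2.2.2.1 q.2.2.2.2 := by
  unfold Gkernel; fun_prop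

/-- Completing the square: `a|X|² + 2b X·V + c|V|² = a|X + (b/a)V|² + ((ac − b²)/a)|V|²`. -/
theorem Gkernel_eq_mul (ha : a ≠ 0) (hD : a * c - b ^ 2 ≠ 0) (X V : 𝕍 n) :
    Gkernel n a b c X V = ((4 * π * √(a * c - b ^ 2)) ^ (n - 1))⁻¹ *
      (rexp (-(a / (4 * (a * c - b ^ 2))) * ‖X + (b / a) • V‖ ^ 2) *
        rexp (-(1 / (4 * a)) * ‖V‖ ^ 2)) := by
  rw [Gkernel, ← exp_add, norm_add_sq_real, real_inner_smul_right, norm_smul, norm_eq_abs,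
    mul_pow |b / a|, sq_abs]
  congr 2
  field_simp
  ring

theorem integral_Gkernel (ha : 0 < a) (hD : 0 < a * c - b ^ 2) :
    ∫ p : 𝕍 n × 𝕍 n, Gkernel n a b c p.1 p.2 = 1 := by
  have hα : 0 < a / (4 * (a * c - b ^ 2)) := by positivity
  have hβ : 0 < 1 / (4 * a) := by positivity
  have hsq : π / (a / (4 * (a * c - b ^ 2))) * (π / (1 / (4 * a))) =
      (4 * π * √(a * c - b ^ 2)) ^ (2 : ℝ) := by
    rw [mul_rpow (by positivity) (sqrt_nonneg _), rpow_two, rpow_two, sq_sqrt hD.le]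
    field_simp
  simp_rw [Gkernel_eq_mul ha.ne' hD.ne', integral_const_mul]
  rw [Measure.volume_eq_prod, integral_prod_comp_add_mul (integrable_exp_neg_mul_sq_norm hα)
      (by fun_prop : Continuous _).stronglyMeasurable (by fun_prop)
      (integrable_exp_neg_mul_sq_norm hβ),
    GaussianFourier.integral_rexp_neg_mul_sq_norm hα,
    GaussianFourier.integral_rexp_neg_mul_sq_norm hβ, ← mul_rpow (by positivity) (by positivity),
    finrank_euclideanSpace_fin, hsq, ← rpow_mul (by positivity), mul_div_cancel₀ _ two_ne_zero,
    rpow_natCast]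
  exact inv_mul_cancel₀ (by positivity)

theorem integrable_Gkernel (ha : 0 < a) (hD : 0 < a * c - b ^ 2) :
    Integrable fun p : 𝕍 n × 𝕍 n => Gkernel n a b c p.1 p.2 :=
  Integrable.of_integral_ne_zero (by rw [integral_Gkernel ha hD]; exact one_ne_zero)

end Gkernel

section Moments

variable {f : ℝ → ℝ} {m r t : ℝ}

theorem mul_sub_le_intervalIntegral (hrt : r ≤ t) (hf : IntervalIntegrable f volume r t)
    (hm : ∀ s ∈ Set.Icc r t, m ≤ f s) : m * (t - r) ≤ ∫ s in r..t, f s := by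
  have := intervalIntegral.integral_mono_on hrt intervalIntegrable_const hf hm
  rwa [intervalIntegral.integral_const, smul_eq_mul, mul_comm] at this

/-- For the moments `a, b, c` of `f` and `s₀ = b/a`,
`ac − b² = a ∫ f(s)(s − s₀)² ds ≥ a m ∫ (s − s₀)² ds > 0`. -/
theorem sq_intervalIntegral_mul_lt (hm : 0 < m) (hrt : r < t)
    (hf : ContinuousOn f (Set.Icc r t)) (hfm : ∀ s ∈ Set.Icc r t, m ≤ f s) :
    (∫ s in r..t, s * f s) ^ 2 < (∫ s in r..t, f s) * ∫ s in r..t, s ^ 2 * f s := by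
  have hint : ∀ {g : ℝ → ℝ}, Continuous g → IntervalIntegrable (fun s => g s * f s) volume r t :=
    fun hg => (hg.continuousOn.mul hf).intervalIntegrable_of_Icc hrt.le
  have hfI : IntervalIntegrable f volume r t := hf.intervalIntegrable_of_Icc hrt.le
  set a := ∫ s in r..t, f s
  set b := ∫ s in r..t, s * f s
  set c := ∫ s in r..t, s ^ 2 * f s
  have ha : 0 < a :=
    (mul_pos hm (sub_pos.2 hrt)).trans_le (mul_sub_le_intervalIntegral hrt.le hfI hfm)
  set s₀ := b / a
  have hvar : ∫ s in r..t, (s - s₀) ^ 2 * f s = c - 2 * s₀ * b + s₀ ^ 2 * a := by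
    have hexpand : ∀ s, (s - s₀) ^ 2 * f s = s ^ 2 * f s - 2 * s₀ * (s * f s) + s₀ ^ 2 * f s :=
      fun s => by ring
    simp_rw [hexpand]
    rw [intervalIntegral.integral_add ((hint (by fun_prop)).sub ((hint (by fun_prop)).const_mul _))
        (hfI.const_mul _),
      intervalIntegral.integral_sub (hint (by fun_prop)) ((hint (by fun_prop)).const_mul _),
      intervalIntegral.integral_const_mul, intervalIntegral.integral_const_mul]
  have hsq : ∫ s in r..t, (s - s₀) ^ 2 = ((t - s₀) ^ 3 - (r - s₀) ^ 3) / 3 := by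
    rw [intervalIntegral.integral_comp_sub_right (fun s => s ^ 2), integral_pow]; ring
  have hlow : m * (((t - s₀) ^ 3 - (r - s₀) ^ 3) / 3) ≤ ∫ s in r..t, (s - s₀) ^ 2 * f s := by
    rw [← hsq, ← intervalIntegral.integral_const_mul]
    refine intervalIntegral.integral_mono_on hrt.le
      ((by fun_prop : Continuous fun s => m * (s - s₀) ^ 2).intervalIntegrable _ _)
      (hint (by fun_prop)) fun s hs => ?_
    rw [mul_comm]
    exact mul_le_mul_of_nonneg_left (hfm s hs) (sq_nonneg _)
  have hcube : 0 < ((t - s₀) ^ 3 - (r - s₀) ^ 3) / 3 := by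
    nlinarith [pow_pos (sub_pos.mpr hrt) 3, mul_nonneg (sub_pos.mpr hrt).le
      (sq_nonneg ((r - s₀) + (t - r) / 2))]
  have hid : a * c - b ^ 2 = a * (c - 2 * s₀ * b + s₀ ^ 2 * a) := by
    simp only [s₀]; field_simp; ring
  nlinarith [mul_pos ha ((mul_pos hm hcube).trans_le (hvar ▸ hlow))]

end Moments

def IsPositiveCoeff (f : ℝ → ℝ) (m : ℝ) : Prop :=
  0 < m ∧ ContinuousOn f (Set.Ici 0) ∧ ∀ s, 0 ≤ s → m ≤ f s

namespace IsPositiveCoeff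

variable {f : ℝ → ℝ} {m r t : ℝ}

theorem continuousOn_Icc (hf : IsPositiveCoeff f m) (hr : 0 ≤ r) :
    ContinuousOn f (Set.Icc r t) :=
  hf.2.1.mono fun _ hs => hr.trans hs.1

theorem mul_sub_le_integral (hf : IsPositiveCoeff f m) (hr : 0 ≤ r) (hrt : r ≤ t) :
    m * (t - r) ≤ ∫ s in r..t, f s :=
  mul_sub_le_intervalIntegral hrt ((hf.continuousOn_Icc hr).intervalIntegrable_of_Icc hrt)
    fun s hs => hf.2.2 s (hr.trans hs.1)

theorem exp_neg_integral_le (hf : IsPositiveCoeff f m) (hr : 0 ≤ r) (hrt : r ≤ t) :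
    rexp (-(∫ s in r..t, f s)) ≤ rexp (-(m * (t - r))) :=
  exp_le_exp.2 (neg_le_neg (hf.mul_sub_le_integral hr hrt))

theorem moments_pos (hf : IsPositiveCoeff f m) (hr : 0 ≤ r) (hrt : r < t) :
    0 < ∫ s in r..t, f s ∧
      0 < (∫ s in r..t, f s) * (∫ s in r..t, s ^ 2 * f s) - (∫ s in r..t, s * f s) ^ 2 :=
  ⟨(mul_pos hf.1 (sub_pos.2 hrt)).trans_le (hf.mul_sub_le_integral hr hrt.le),
    sub_pos.2 <| sq_intervalIntegral_mul_lt hf.1 hrt (hf.continuousOn_Icc hr)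
      fun s hs => hf.2.2 s (hr.trans hs.1)⟩

/-- The primitive of a nonnegative function is monotone, hence measurable. -/
theorem aemeasurable_primitive (hf : IsPositiveCoeff f m) (hr : 0 ≤ r) (k : ℕ) :
    AEMeasurable (fun t => ∫ s in r..t, s ^ k * f s) (volume.restrict (Set.Ioi r)) := by
  refine aemeasurable_restrict_of_monotoneOn measurableSet_Ioi fun t₁ ht₁ t₂ ht₂ h => ?_
  have hcont : ContinuousOn (fun s => s ^ k * f s) (Set.Icc r t₂) :=
    (continuousOn_pow k).mul (hf.continuousOn_Icc hr)
  refine intervalIntegral.integral_mono_interval le_rfl (le_of_lt ht₁) h ?_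
    (hcont.intervalIntegrable_of_Icc (le_of_lt ht₂))
  filter_upwards [ae_restrict_mem measurableSet_Ioc] with s hs
  exact mul_nonneg (pow_nonneg (hr.trans hs.1.le) k) (hf.1.le.trans (hf.2.2 s (hr.trans hs.1.le)))

end IsPositiveCoeff

theorem integral_norm_mul_le_of_integral_eq_one {β : Type*} [MeasurableSpace β] {ν : Measure β}
    {k g : β → ℝ} {K : ℝ} (hk : Integrable k ν) (hk0 : ∀ y, 0 ≤ k y) (hk1 : ∫ y, k y ∂ν = 1)
    (hg : ∀ y, |g y| ≤ K) : ∫ y, ‖k y * g y‖ ∂ν ≤ K :=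
  calc ∫ y, ‖k y * g y‖ ∂ν ≤ ∫ y, K * k y ∂ν :=
        integral_mono_of_nonneg (ae_of_all _ fun _ => norm_nonneg _) (hk.const_mul K)
          (ae_of_all _ fun y => by
            simpa only [norm_mul, norm_of_nonneg (hk0 y), norm_eq_abs, mul_comm K]
              using mul_le_mul_of_nonneg_left (hg y) (hk0 y))
    _ = K := by rw [integral_const_mul, hk1, mul_one]

theorem integrable_prod_of_integral_norm_le {α β E : Type*} [MeasurableSpace α]
    [MeasurableSpace β] [NormedAddCommGroup E] {μ : Measure α} {ν : Measure β} [SFinite ν]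
    {f : α × β → E} {g : α → ℝ} (hf : AEStronglyMeasurable f (μ.prod ν)) (hg : Integrable g μ)
    (h : ∀ᵐ x ∂μ, Integrable (fun y => f (x, y)) ν ∧ ∫ y, ‖f (x, y)‖ ∂ν ≤ g x) :
    Integrable f (μ.prod ν) :=
  (integrable_prod_iff hf).2 ⟨h.mono fun _ hx => hx.1, hg.mono' hf.norm.integral_prod_right'
    (h.mono fun _ hx => (norm_of_nonneg (integral_nonneg fun _ => norm_nonneg _)).trans_le hx.2)⟩

section ExpDecay

variable {b r : ℝ}

theorem exp_neg_mul_sub_eq (t : ℝ) : rexp (-(b * (t - r))) = rexp (b * r) * rexp (-b * t) := by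
  rw [← exp_add]; ring_nf

theorem integrableOn_exp_neg_mul_sub_Ioi (hb : 0 < b) :
    IntegrableOn (fun t => rexp (-(b * (t - r)))) (Set.Ioi r) := by
  simp_rw [exp_neg_mul_sub_eq]
  exact (exp_neg_integrableOn_Ioi r hb).const_mul (rexp (b * r))

theorem integral_exp_neg_mul_sub_Ioi (hb : 0 < b) :
    ∫ t in Set.Ioi r, rexp (-(b * (t - r))) = b⁻¹ := by
  simp_rw [exp_neg_mul_sub_eq, integral_const_mul, integral_exp_mul_Ioi (neg_lt_zero.2 hb)]
  rw [neg_div_neg_eq, mul_div_assoc', ← exp_add, neg_mul, add_neg_cancel, exp_zero, one_div]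

theorem one_add_mul_exp_neg_le (hb : 0 < b) {u : ℝ} (hu : 0 ≤ u) :
    (1 + u) * rexp (-(b * u)) ≤ (1 + 2 / b) * rexp (-(b / 2 * u)) := by
  have hlin : 1 + u ≤ (1 + 2 / b) * rexp (b / 2 * u) :=
    calc 1 + u ≤ (1 + 2 / b) * (1 + b / 2 * u) := by
          field_simp; nlinarith [mul_nonneg hb.le hu]
      _ ≤ (1 + 2 / b) * rexp (b / 2 * u) := by
          gcongr; linarith [add_one_le_exp (b / 2 * u)]
  calc (1 + u) * rexp (-(b * u)) ≤ (1 + 2 / b) * rexp (b / 2 * u) * rexp (-(b * u)) := by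
        gcongr
    _ = (1 + 2 / b) * rexp (-(b / 2 * u)) := by rw [mul_assoc, ← exp_add]; ring_nf

end ExpDecay

theorem sqrt_norm_add_smul_sq_add_sq_le {F : Type*} [SeminormedAddCommGroup F]
    [NormedSpace ℝ F] (x y : F) (c : ℝ) :
    √(‖x + c • y‖ ^ 2 + ‖y‖ ^ 2) ≤ (1 + |c|) * √(‖x‖ ^ 2 + ‖y‖ ^ 2) := by
  have htri : ‖x + c • y‖ ≤ ‖x‖ + |c| * ‖y‖ := by
    simpa [norm_smul] using norm_add_le x (c • y)
  rw [← sqrt_sq (by positivity : 0 ≤ 1 + |c|), ← sqrt_mul (by positivity)]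
  gcongr
  nlinarith [norm_nonneg (x + c • y), norm_nonneg x, norm_nonneg y, abs_nonneg c,
    mul_nonneg (abs_nonneg c) (sq_nonneg (‖x‖ - ‖y‖)), sq_nonneg c, sq_abs c]

section PencilBeam

noncomputable def pencilIntegrand (n : ℕ) (sig lam : ℝ → ℝ) (Ψ : 𝕍 n → ℝ → 𝕍 n → ℝ)
    (X' : 𝕍 n) (r : ℝ) (V : 𝕍 n) (q : ℝ × (𝕍 n × 𝕍 n)) : ℝ :=
  rexp (-(∫ s in r..q.1, lam s)) * H3kernel n sig r q.1 q.2.1 q.2.2 *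
    Ψ (X' - q.2.1 + (r - q.1) • V + q.1 • q.2.2) q.1 (V - q.2.2)

noncomputable def sourceAverage (n : ℕ) (sig : ℝ → ℝ) (Ψ : 𝕍 n → ℝ → 𝕍 n → ℝ) (X' : 𝕍 n)
    (r : ℝ) (V : 𝕍 n) (t : ℝ) : ℝ :=
  ∫ p : 𝕍 n × 𝕍 n, H3kernel n sig r t p.1 p.2 * Ψ (X' - p.1 + (r - t) • V + t • p.2) t (V - p.2)

variable {n : ℕ} {sig lam : ℝ → ℝ} {σ₀ lam₀ M L r t : ℝ} {Ψ : 𝕍 n → ℝ → 𝕍 n → ℝ}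
  {X' V : 𝕍 n}

theorem Wsol_eq_integral_sourceAverage (X' V : 𝕍 n) :
    Wsol n sig lam Ψ X' r V =
      ∫ t in Set.Ioi r, rexp (-(∫ s in r..t, lam s)) * sourceAverage n sig Ψ X' r V t :=
  rfl

theorem integral_H3kernel (hsig : IsPositiveCoeff sig σ₀) (hr : 0 ≤ r) (hrt : r < t) :
    ∫ p : 𝕍 n × 𝕍 n, H3kernel n sig r t p.1 p.2 = 1 :=
  integral_Gkernel (hsig.moments_pos hr hrt).1 (hsig.moments_pos hr hrt).2

theorem integrable_H3kernel (hsig : IsPositiveCoeff sig σ₀) (hr : 0 ≤ r) (hrt : r < t) :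
    Integrable fun p : 𝕍 n × 𝕍 n => H3kernel n sig r t p.1 p.2 :=
  integrable_Gkernel (hsig.moments_pos hr hrt).1 (hsig.moments_pos hr hrt).2

theorem integrable_H3kernel_mul (hsig : IsPositiveCoeff sig σ₀)
    (hΨ : Continuous fun z : 𝕍 n × ℝ × 𝕍 n => Ψ z.1 z.2.1 z.2.2) (hM : ∀ x t v, |Ψ x t v| ≤ M)
    (hr : 0 ≤ r) (hrt : r < t) :
    Integrable fun p : 𝕍 n × 𝕍 n =>
      H3kernel n sig r t p.1 p.2 * Ψ (X' - p.1 + (r - t) • V + t • p.2) t (V - p.2) :=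
  (integrable_H3kernel hsig hr hrt).mul_bdd
    (hΨ.comp (by fun_prop : Continuous fun p : 𝕍 n × 𝕍 n =>
      (X' - p.1 + (r - t) • V + t • p.2, t, V - p.2))).aestronglyMeasurable
    (ae_of_all _ fun _ => hM _ _ _)

theorem integral_pencilIntegrand_slice :
    ∫ p, pencilIntegrand n sig lam Ψ X' r V (t, p) =
      rexp (-(∫ s in r..t, lam s)) * sourceAverage n sig Ψ X' r V t := by
  simp only [pencilIntegrand, mul_assoc]
  exact integral_const_mul _ _

theorem integral_norm_pencilIntegrand_slice_le (hsig : IsPositiveCoeff sig σ₀)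
    (hlam : IsPositiveCoeff lam lam₀) (hM : ∀ x t v, |Ψ x t v| ≤ M) (hr : 0 ≤ r) (hrt : r < t) :
    ∫ p, ‖pencilIntegrand n sig lam Ψ X' r V (t, p)‖ ≤ M * rexp (-(lam₀ * (t - r))) := by
  have hrw : ∀ p : 𝕍 n × 𝕍 n, pencilIntegrand n sig lam Ψ X' r V (t, p) =
      H3kernel n sig r t p.1 p.2 *
        (rexp (-(∫ s in r..t, lam s)) * Ψ (X' - p.1 + (r - t) • V + t • p.2) t (V - p.2)) :=
    fun p => by simp only [pencilIntegrand]; ring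
  simp_rw [hrw]
  refine integral_norm_mul_le_of_integral_eq_one (integrable_H3kernel hsig hr hrt)
    (fun _ => Gkernel_nonneg _ _) (integral_H3kernel hsig hr hrt) fun p => ?_
  rw [abs_mul, abs_of_pos (exp_pos _), mul_comm M]
  exact mul_le_mul (hlam.exp_neg_integral_le hr hrt.le) (hM _ _ _) (abs_nonneg _) (exp_pos _).le

theorem aestronglyMeasurable_pencilIntegrand (hsig : IsPositiveCoeff sig σ₀)
    (hlam : IsPositiveCoeff lam lam₀) (hΨ : Continuous fun z : 𝕍 n × ℝ × 𝕍 n => Ψ z.1 z.2.1 z.2.2)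
    (hr : 0 ≤ r) :
    AEStronglyMeasurable (pencilIntegrand n sig lam Ψ X' r V)
      ((volume.restrict (Set.Ioi r)).prod volume) := by
  have hprim : ∀ {f : ℝ → ℝ} {m : ℝ} (k : ℕ), IsPositiveCoeff f m →
      AEMeasurable (fun q : ℝ × (𝕍 n × 𝕍 n) => ∫ s in r..q.1, s ^ k * f s)
        ((volume.restrict (Set.Ioi r)).prod volume) :=
    fun k hf => (hf.aemeasurable_primitive hr k).comp_fst
  have hΛ := hprim 0 hlam
  have hA := hprim 0 hsig
  have hB := hprim 1 hsig
  have hC := hprim 2 hsig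
  simp only [pow_zero, one_mul, pow_one] at hΛ hA hB
  have hG := measurable_Gkernel.comp_aemeasurable
    (hA.prodMk (hB.prodMk (hC.prodMk (measurable_snd.fst.prodMk measurable_snd.snd).aemeasurable)))
  have hΨ' : Measurable fun q : ℝ × (𝕍 n × 𝕍 n) =>
      Ψ (X' - q.2.1 + (r - q.1) • V + q.1 • q.2.2) q.1 (V - q.2.2) :=
    (hΨ.comp (by fun_prop : Continuous fun q : ℝ × (𝕍 n × 𝕍 n) =>
      (X' - q.2.1 + (r - q.1) • V + q.1 • q.2.2, q.1, V - q.2.2))).measurable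
  exact ((hΛ.neg.exp.mul hG).mul hΨ'.aemeasurable).aestronglyMeasurable

theorem integrable_pencilIntegrand (hsig : IsPositiveCoeff sig σ₀)
    (hlam : IsPositiveCoeff lam lam₀) (hΨ : Continuous fun z : 𝕍 n × ℝ × 𝕍 n => Ψ z.1 z.2.1 z.2.2)
    (hM : ∀ x t v, |Ψ x t v| ≤ M) (X' V : 𝕍 n) (hr : 0 ≤ r) :
    Integrable (pencilIntegrand n sig lam Ψ X' r V)
      ((volume.restrict (Set.Ioi r)).prod volume) := by
  refine integrable_prod_of_integral_norm_le
    (aestronglyMeasurable_pencilIntegrand hsig hlam hΨ hr)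
    ((integrableOn_exp_neg_mul_sub_Ioi hlam.1).const_mul M) ?_
  filter_upwards [ae_restrict_mem measurableSet_Ioi] with t ht
  refine ⟨?_, integral_norm_pencilIntegrand_slice_le hsig hlam hM hr ht⟩
  simpa only [pencilIntegrand, mul_assoc] using
    (integrable_H3kernel_mul (X' := X') (V := V) hsig hΨ hM hr ht).const_mul _

theorem integrable_Wsol_integrand (hsig : IsPositiveCoeff sig σ₀)
    (hlam : IsPositiveCoeff lam lam₀) (hΨ : Continuous fun z : 𝕍 n × ℝ × 𝕍 n => Ψ z.1 z.2.1 z.2.2)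
    (hM : ∀ x t v, |Ψ x t v| ≤ M) (X' V : 𝕍 n) (hr : 0 ≤ r) :
    Integrable (fun t => rexp (-(∫ s in r..t, lam s)) * sourceAverage n sig Ψ X' r V t)
      (volume.restrict (Set.Ioi r)) := by
  simpa only [integral_pencilIntegrand_slice] using
    (integrable_pencilIntegrand hsig hlam hΨ hM X' V hr).integral_prod_left

theorem abs_sourceAverage_sub_le (hsig : IsPositiveCoeff sig σ₀)
    (hΨ : Continuous fun z : 𝕍 n × ℝ × 𝕍 n => Ψ z.1 z.2.1 z.2.2) (hM : ∀ x t v, |Ψ x t v| ≤ M)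
    (hL : 0 ≤ L) (hlip : ∀ (X₁ X₂ V₁ V₂ : 𝕍 n) (t : ℝ), 0 ≤ t →
      |Ψ X₁ t V₁ - Ψ X₂ t V₂| ≤ L * √(‖X₁ - X₂‖ ^ 2 + ‖V₁ - V₂‖ ^ 2))
    (X₁' X₂' V₁ V₂ : 𝕍 n) (hr : 0 ≤ r) (hrt : r < t) :
    |sourceAverage n sig Ψ X₁' r V₁ t - sourceAverage n sig Ψ X₂' r V₂ t| ≤
      L * (1 + (t - r)) * √(‖X₁' - X₂'‖ ^ 2 + ‖V₁ - V₂‖ ^ 2) := by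
  rw [sourceAverage, sourceAverage, ← integral_sub (integrable_H3kernel_mul hsig hΨ hM hr hrt)
    (integrable_H3kernel_mul hsig hΨ hM hr hrt), ← norm_eq_abs]
  simp_rw [← mul_sub]
  refine (norm_integral_le_integral_norm _).trans <|
    integral_norm_mul_le_of_integral_eq_one (integrable_H3kernel hsig hr hrt)
      (fun _ => Gkernel_nonneg _ _) (integral_H3kernel hsig hr hrt) fun p => ?_
  have hX : X₁' - p.1 + (r - t) • V₁ + t • p.2 - (X₂' - p.1 + (r - t) • V₂ + t • p.2) =
      X₁' - X₂' + (r - t) • (V₁ - V₂) := by module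
  have hV : V₁ - p.2 - (V₂ - p.2) = V₁ - V₂ := by abel
  refine (hlip _ _ _ _ t (hr.trans hrt.le)).trans ?_
  rw [hX, hV, mul_assoc]
  gcongr
  refine (sqrt_norm_add_smul_sq_add_sq_le _ _ _).trans_eq ?_
  rw [abs_of_neg (sub_neg.2 hrt), neg_sub]

theorem abs_Wsol_sub_le (hsig : IsPositiveCoeff sig σ₀) (hlam : IsPositiveCoeff lam lam₀)
    (hΨ : Continuous fun z : 𝕍 n × ℝ × 𝕍 n => Ψ z.1 z.2.1 z.2.2) (hM : ∀ x t v, |Ψ x t v| ≤ M)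
    (hL : 0 ≤ L) (hlip : ∀ (X₁ X₂ V₁ V₂ : 𝕍 n) (t : ℝ), 0 ≤ t →
      |Ψ X₁ t V₁ - Ψ X₂ t V₂| ≤ L * √(‖X₁ - X₂‖ ^ 2 + ‖V₁ - V₂‖ ^ 2))
    (X₁' X₂' V₁ V₂ : 𝕍 n) (hr : 0 ≤ r) :
    |Wsol n sig lam Ψ X₁' r V₁ - Wsol n sig lam Ψ X₂' r V₂| ≤
      2 / lam₀ * (1 + 2 / lam₀) * L * √(‖X₁' - X₂'‖ ^ 2 + ‖V₁ - V₂‖ ^ 2) := by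
  set d := √(‖X₁' - X₂'‖ ^ 2 + ‖V₁ - V₂‖ ^ 2)
  have hpt : ∀ t ∈ Set.Ioi r,
      ‖rexp (-(∫ s in r..t, lam s)) * sourceAverage n sig Ψ X₁' r V₁ t -
        rexp (-(∫ s in r..t, lam s)) * sourceAverage n sig Ψ X₂' r V₂ t‖ ≤
      L * d * (1 + 2 / lam₀) * rexp (-(lam₀ / 2 * (t - r))) := fun t (hrt : r < t) => by
    rw [← mul_sub, norm_mul, norm_of_nonneg (exp_pos _).le, norm_eq_abs]
    calc _ ≤ rexp (-(lam₀ * (t - r))) * (L * (1 + (t - r)) * d) :=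
          mul_le_mul (hlam.exp_neg_integral_le hr hrt.le)
            (abs_sourceAverage_sub_le hsig hΨ hM hL hlip X₁' X₂' V₁ V₂ hr hrt)
            (abs_nonneg _) (exp_pos _).le
      _ = L * d * ((1 + (t - r)) * rexp (-(lam₀ * (t - r)))) := by ring
      _ ≤ L * d * ((1 + 2 / lam₀) * rexp (-(lam₀ / 2 * (t - r)))) :=
          mul_le_mul_of_nonneg_left (one_add_mul_exp_neg_le hlam.1 (sub_nonneg.2 hrt.le))
            (mul_nonneg hL (sqrt_nonneg _))
      _ = _ := by ring
  rw [Wsol_eq_integral_sourceAverage, Wsol_eq_integral_sourceAverage,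
    ← integral_sub (integrable_Wsol_integrand hsig hlam hΨ hM X₁' V₁ hr)
      (integrable_Wsol_integrand hsig hlam hΨ hM X₂' V₂ hr), ← norm_eq_abs]
  refine (norm_integral_le_of_norm_le
    ((integrableOn_exp_neg_mul_sub_Ioi (half_pos hlam.1)).const_mul (L * d * (1 + 2 / lam₀)))
    ((ae_restrict_mem measurableSet_Ioi).mono hpt)).trans_eq ?_
  rw [integral_const_mul, integral_exp_neg_mul_sub_Ioi (half_pos hlam.1)]
  field_simp

end PencilBeam

theorem backward_pencilBeam_lipschitz_general
    (n : ℕ) (lam₀ : ℝ) (hlam₀ : 0 < lam₀) :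
    ∃ C > 0, ∀ (sig lam : ℝ → ℝ) (σ₀ : ℝ), 0 < σ₀ →
      ContinuousOn sig (Set.Ici 0) → (∀ s, 0 ≤ s → σ₀ ≤ sig s) →
      ContinuousOn lam (Set.Ici 0) → (∀ s, 0 ≤ s → lam₀ ≤ lam s) →
      ∀ (Ψ : EuclideanSpace ℝ (Fin (n - 1)) → ℝ → EuclideanSpace ℝ (Fin (n - 1)) → ℝ)
        (L : ℝ),
        Continuous (fun z : EuclideanSpace ℝ (Fin (n - 1)) × ℝ ×
            EuclideanSpace ℝ (Fin (n - 1)) => Ψ z.1 z.2.1 z.2.2) →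
        HasCompactSupport (fun z : EuclideanSpace ℝ (Fin (n - 1)) × ℝ ×
            EuclideanSpace ℝ (Fin (n - 1)) => Ψ z.1 z.2.1 z.2.2) →
        (∀ (X₁ X₂ V₁ V₂ : EuclideanSpace ℝ (Fin (n - 1))) (t : ℝ), 0 ≤ t →
          |Ψ X₁ t V₁ - Ψ X₂ t V₂| ≤ L * Real.sqrt (‖X₁ - X₂‖ ^ 2 + ‖V₁ - V₂‖ ^ 2)) →
        -- absolute convergence of the double integral defining `W`
        (∀ (X' V : EuclideanSpace ℝ (Fin (n - 1))) (r : ℝ), 0 ≤ r →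
          MeasureTheory.IntegrableOn
            (fun q : ℝ × (EuclideanSpace ℝ (Fin (n - 1)) ×
                EuclideanSpace ℝ (Fin (n - 1))) =>
              Real.exp (-(∫ s in r..q.1, lam s)) * H3kernel n sig r q.1 q.2.1 q.2.2 *
                Ψ (X' - q.2.1 + (r - q.1) • V + q.1 • q.2.2) q.1 (V - q.2.2))
            (Set.Ioi r ×ˢ Set.univ) MeasureTheory.volume) ∧
        -- uniform-in-`r` Lipschitz estimate in `Z = (X', V)`
        ∀ (X₁' X₂' V₁ V₂ : EuclideanSpace ℝ (Fin (n - 1))) (r : ℝ), 0 ≤ r →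
          |Wsol n sig lam Ψ X₁' r V₁ - Wsol n sig lam Ψ X₂' r V₂|
            ≤ C * L * Real.sqrt (‖X₁' - X₂'‖ ^ 2 + ‖V₁ - V₂‖ ^ 2) := by
  refine ⟨2 / lam₀ * (1 + 2 / lam₀), by positivity, ?_⟩
  intro sig lam σ₀ hσ₀ hsigc hsiglb hlamc hlamlb Ψ L hΨ hΨsupp hlip
  have hsig : IsPositiveCoeff sig σ₀ := ⟨hσ₀, hsigc, hsiglb⟩
  have hlam : IsPositiveCoeff lam lam₀ := ⟨hlam₀, hlamc, hlamlb⟩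
  obtain ⟨M, hM⟩ := hΨ.bounded_above_of_compact_support hΨsupp
  have hΨM : ∀ x t v, |Ψ x t v| ≤ M := fun x t v => hM (x, t, v)
  refine ⟨fun X' V r hr => ?_, fun X₁' X₂' V₁ V₂ r hr => ?_⟩
  · rw [IntegrableOn, Measure.volume_eq_prod, ← Measure.prod_restrict, Measure.restrict_univ]
    exact integrable_pencilIntegrand hsig hlam hΨ hΨM X' V hr
  -- `L ≥ 0` is forced by the Lipschitz bound unless `Z₁ = Z₂`.
  rcases (sqrt_nonneg (‖X₁' - X₂'‖ ^ 2 + ‖V₁ - V₂‖ ^ 2)).eq_or_lt with hzero | hpos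
  · obtain ⟨hX, hV⟩ := (add_eq_zero_iff_of_nonneg (by positivity) (by positivity)).1
      ((sqrt_eq_zero (by positivity)).1 hzero.symm)
    rw [sq_eq_zero_iff, norm_sub_eq_zero_iff] at hX hV
    simp [hX, hV]
  have hL : 0 ≤ L :=
    nonneg_of_mul_nonneg_left ((abs_nonneg _).trans (hlip X₁' X₂' V₁ V₂ 0 le_rfl)) hpos
  exact abs_Wsol_sub_le hsig hlam hΨ hΨM hL hlip X₁' X₂' V₁ V₂ hr

/-- Lemma 4.3: Lipschitz continuity of the backward pencil-beam solution. The integrals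
defining `W` converge absolutely, and there is `C > 0` depending only on `n` and `λ₀` such
that `|W(Z₁,r) − W(Z₂,r)| ≤ C·L·|Z₁ − Z₂|` for every admissible data. -/
theorem backward_pencilBeam_lipschitz
    (n : ℕ) (hn : 2 ≤ n) (lam₀ : ℝ) (hlam₀ : 0 < lam₀) :
    ∃ C > 0, ∀ (sig lam : ℝ → ℝ) (σ₀ : ℝ), 0 < σ₀ →
      ContinuousOn sig (Set.Ici 0) → (∀ s, 0 ≤ s → σ₀ ≤ sig s) →
      ContinuousOn lam (Set.Ici 0) → (∀ s, 0 ≤ s → lam₀ ≤ lam s) →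
      ∀ (Ψ : EuclideanSpace ℝ (Fin (n - 1)) → ℝ → EuclideanSpace ℝ (Fin (n - 1)) → ℝ)
        (L : ℝ),
        Continuous (fun z : EuclideanSpace ℝ (Fin (n - 1)) × ℝ ×
            EuclideanSpace ℝ (Fin (n - 1)) => Ψ z.1 z.2.1 z.2.2) →
        HasCompactSupport (fun z : EuclideanSpace ℝ (Fin (n - 1)) × ℝ ×
            EuclideanSpace ℝ (Fin (n - 1)) => Ψ z.1 z.2.1 z.2.2) →
        (∀ (X₁ X₂ V₁ V₂ : EuclideanSpace ℝ (Fin (n - 1))) (t : ℝ), 0 ≤ t →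
          |Ψ X₁ t V₁ - Ψ X₂ t V₂| ≤ L * Real.sqrt (‖X₁ - X₂‖ ^ 2 + ‖V₁ - V₂‖ ^ 2)) →
        -- absolute convergence of the double integral defining `W`
        (∀ (X' V : EuclideanSpace ℝ (Fin (n - 1))) (r : ℝ), 0 ≤ r →
          MeasureTheory.IntegrableOn
            (fun q : ℝ × (EuclideanSpace ℝ (Fin (n - 1)) ×
                EuclideanSpace ℝ (Fin (n - 1))) =>
              Real.exp (-(∫ s in r..q.1, lam s)) * H3kernel n sig r q.1 q.2.1 q.2.2 *
                Ψ (X' - q.2.1 + (r - q.1) • V + q.1 • q.2.2) q.1 (V - q.2.2))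
            (Set.Ioi r ×ˢ Set.univ) MeasureTheory.volume) ∧
        -- uniform-in-`r` Lipschitz estimate in `Z = (X', V)`
        ∀ (X₁' X₂' V₁ V₂ : EuclideanSpace ℝ (Fin (n - 1))) (r : ℝ), 0 ≤ r →
          |Wsol n sig lam Ψ X₁' r V₁ - Wsol n sig lam Ψ X₂' r V₂|
            ≤ C * L * Real.sqrt (‖X₁' - X₂'‖ ^ 2 + ‖V₁ - V₂‖ ^ 2) :=
  backward_pencilBeam_lipschitz_general n lam₀ hlam₀
end
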